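/- arXiv:1807.08429 — 2 statements merged into one kernel-verified Lean document; each statement's English description precedes it below -/
import Mathlib

section
/- For the bivariate Gumbel copula with δ>1 and fixed α ∈ (0,1), the conditional quantile satisfies -log C_{V|U}^{-1}(α|u;δ) ~ (-δ log α)^{1/δ} (-log u)^{1-1/δ} as u → 0^+, i.e., the ratio of the two sides tends to 1. -/
open Real Set Filter Topology

/-!
With `x = -log u`, `y = -log q(u)` and `t = (y/x)^δ`, taking logarithms in the quantile equation
gives `x((1+t)^{1/δ} - 1) = -log α + (1/δ - 1) log(1+t)`. Since `δ > 1` the right side is at most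
`-log α`, which forces `t → 0` as `x → ∞`; then `(1+t)^{1/δ} - 1 ~ t/δ` and `log(1+t) → 0` give
`x t → -δ log α`. Finally `y = x t^{1/δ}`, so the ratio in question is `(x t / (-δ log α))^{1/δ}`.
-/

theorem log_gumbel_quantile_equation {δ α x y : ℝ} (hδ : δ ≠ 0) (hx : 0 < x) (hy : 0 < y)
    (h : exp x * exp (-((x ^ δ + y ^ δ) ^ (1 / δ))) * (1 + (y / x) ^ δ) ^ (1 / δ - 1) = α) :
    x * ((1 + (y / x) ^ δ) ^ (1 / δ) - 1) = -log α + (1 / δ - 1) * log (1 + (y / x) ^ δ) := by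
  have ht : 0 < (y / x) ^ δ := rpow_pos_of_pos (div_pos hy hx) δ
  have hsum : (x ^ δ + y ^ δ) ^ (1 / δ) = x * (1 + (y / x) ^ δ) ^ (1 / δ) := by
    have : x ^ δ + y ^ δ = x ^ δ * (1 + (y / x) ^ δ) := by
      rw [div_rpow hy.le hx.le, mul_add, mul_one, mul_div_cancel₀ _ (rpow_pos_of_pos hx δ).ne']
    rw [this, mul_rpow (rpow_nonneg hx.le δ) (by positivity), ← rpow_mul hx.le,
      mul_one_div_cancel hδ, rpow_one]
  rw [hsum, ← exp_add] at h
  rw [← h, log_mul (exp_ne_zero _) (rpow_pos_of_pos (by linarith) _).ne',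
    log_exp, log_rpow (by linarith)]
  ring

theorem tendsto_one_add_rpow_sub_one_div (p : ℝ) :
    Tendsto (fun s : ℝ => ((1 + s) ^ p - 1) / s) (𝓝[≠] 0) (𝓝 p) := by
  have hderiv : HasDerivAt (fun s : ℝ => (1 + s) ^ p) p 0 := by
    simpa using ((hasDerivAt_id (0 : ℝ)).const_add 1).rpow_const (p := p) (Or.inl (by norm_num))
  refine (hasDerivAt_iff_tendsto_slope.mp hderiv).congr' ?_
  filter_upwards [self_mem_nhdsWithin] with s hs
  simp [slope_def_field]

section Asymptotics

variable {ι : Type*} {l : Filter ι} {x t : ι → ℝ} {δ L : ℝ}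

theorem tendsto_zero_of_mul_one_add_rpow_sub_one_le (hδ : 0 < δ) (hx : Tendsto x l atTop)
    (ht : ∀ᶠ i in l, 0 ≤ t i) (hle : ∀ᶠ i in l, x i * ((1 + t i) ^ (1 / δ) - 1) ≤ L) :
    Tendsto t l (𝓝 0) := by
  have hbound : Tendsto (fun i => (1 + L / x i) ^ δ - 1) l (𝓝 0) := by
    have h := (((tendsto_const_nhds (x := L)).div_atTop hx).const_add 1).rpow_const (p := δ)
      (Or.inr hδ.le)
    simpa using h.sub_const 1
  refine tendsto_of_tendsto_of_tendsto_of_le_of_le' tendsto_const_nhds hbound ht ?_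
  filter_upwards [ht, hle, hx.eventually_gt_atTop 0] with i hti hlei hxi
  have hroot : (1 + t i) ^ (1 / δ) ≤ 1 + L / x i := by
    rw [← sub_le_iff_le_add', le_div_iff₀ hxi, mul_comm]
    exact hlei
  have := rpow_le_rpow (rpow_nonneg (by linarith) _) hroot hδ.le
  rw [← rpow_mul (by linarith), one_div_mul_cancel hδ.ne', rpow_one] at this
  linarith

theorem tendsto_mul_of_mul_one_add_rpow_sub_one_eq (hδ : 1 < δ) (hx : Tendsto x l atTop)
    (ht : ∀ᶠ i in l, 0 < t i)
    (heq : ∀ᶠ i in l,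
      x i * ((1 + t i) ^ (1 / δ) - 1) = L + (1 / δ - 1) * log (1 + t i)) :
    Tendsto (fun i => x i * t i) l (𝓝 (δ * L)) := by
  have hδ0 : 0 < δ := by linarith
  have hcoef : 1 / δ - 1 ≤ 0 := by
    rw [sub_nonpos, div_le_one hδ0]
    exact hδ.le
  have ht0 : Tendsto t l (𝓝 0) := by
    refine tendsto_zero_of_mul_one_add_rpow_sub_one_le (L := L) hδ0 hx (ht.mono fun i h => h.le) ?_
    filter_upwards [ht, heq] with i hti heqi
    rw [heqi]
    nlinarith [log_nonneg (by linarith : (1 : ℝ) ≤ 1 + t i)]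
  have hslope : Tendsto (fun i => ((1 + t i) ^ (1 / δ) - 1) / t i) l (𝓝 (1 / δ)) :=
    (tendsto_one_add_rpow_sub_one_div (1 / δ)).comp
      (tendsto_nhdsWithin_iff.mpr ⟨ht0, ht.mono fun i h => h.ne'⟩)
  have hlog : Tendsto (fun i => log (1 + t i)) l (𝓝 0) := by
    have h1 : Tendsto (fun i => 1 + t i) l (𝓝 1) := by simpa using ht0.const_add 1
    simpa [Function.comp_def] using (continuousAt_log one_ne_zero).tendsto.comp h1
  have hrhs : Tendsto (fun i => L + (1 / δ - 1) * log (1 + t i)) l (𝓝 L) := by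
    simpa using (hlog.const_mul (1 / δ - 1)).const_add L
  have hlim := hrhs.div hslope (by positivity)
  rw [div_div_eq_mul_div, div_one, mul_comm] at hlim
  refine hlim.congr' ?_
  filter_upwards [ht, heq] with i hti heqi
  have hroot : 0 < (1 + t i) ^ (1 / δ) - 1 := by
    rw [sub_pos]
    exact one_lt_rpow (by linarith) (by positivity)
  rw [Pi.div_apply, ← heqi]
  field_simp

end Asymptotics

theorem div_rpow_one_div_mul_rpow_one_sub {δ c x y : ℝ} (hδ : δ ≠ 0) (hc : 0 < c) (hx : 0 < x)
    (hy : 0 ≤ y) : y / (c ^ (1 / δ) * x ^ (1 - 1 / δ)) = (x * (y / x) ^ δ / c) ^ (1 / δ) := by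
  rw [div_rpow (by positivity) hc.le, mul_rpow hx.le (by positivity),
    ← rpow_mul (div_nonneg hy hx.le), mul_one_div_cancel hδ, rpow_one, rpow_sub hx, rpow_one]
  field_simp

/-- For the bivariate Gumbel copula with `δ>1` and fixed `α ∈ (0,1)`, the conditional quantile
function `q u = C_{V|U}^{-1}(α|u;δ)` (the inverse in `v` of the conditional CDF
`C_{V|U}(v|u) = u⁻¹ exp{-[(-log u)^δ+(-log v)^δ]^{1/δ}} [1+((-log v)/(-log u))^δ]^{1/δ-1}`)
satisfies `-log q(u) ~ (-δ log α)^{1/δ} (-log u)^{1-1/δ}` as `u → 0⁺`. -/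
theorem gumbel_quantile_lower_tail (δ α : ℝ) (hδ : 1 < δ) (hα : α ∈ Ioo (0:ℝ) 1)
    (q : ℝ → ℝ) (hq_mem : ∀ u ∈ Ioo (0:ℝ) 1, q u ∈ Ioo (0:ℝ) 1)
    (hq : ∀ u ∈ Ioo (0:ℝ) 1,
      u⁻¹ * Real.exp (-(((-Real.log u) ^ δ + (-Real.log (q u)) ^ δ) ^ (1 / δ))) *
        (1 + ((-Real.log (q u)) / (-Real.log u)) ^ δ) ^ (1 / δ - 1) = α) :
    Tendsto (fun u : ℝ =>
        (-Real.log (q u)) / ((-δ * Real.log α) ^ (1 / δ) * (-Real.log u) ^ (1 - 1 / δ)))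
      (𝓝[>] (0:ℝ)) (𝓝 1) := by
  have hlog_pos : ∀ u ∈ Ioo (0:ℝ) 1, 0 < -log u := fun u hu => neg_pos.mpr (log_neg hu.1 hu.2)
  have hmem : ∀ᶠ u in 𝓝[>] (0:ℝ), u ∈ Ioo (0:ℝ) 1 := Ioo_mem_nhdsGT one_pos
  have hx : Tendsto (fun u : ℝ => -log u) (𝓝[>] 0) atTop :=
    tendsto_neg_atTop_iff.mpr tendsto_log_nhdsGT_zero
  have hxt : Tendsto (fun u => -log u * (-log (q u) / -log u) ^ δ) (𝓝[>] 0)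
      (𝓝 (δ * -log α)) := by
    refine tendsto_mul_of_mul_one_add_rpow_sub_one_eq hδ hx ?_ ?_
    · filter_upwards [hmem] with u hu
      exact rpow_pos_of_pos (div_pos (hlog_pos _ (hq_mem u hu)) (hlog_pos u hu)) δ
    · filter_upwards [hmem] with u hu
      refine log_gumbel_quantile_equation (by positivity) (hlog_pos u hu)
        (hlog_pos _ (hq_mem u hu)) ?_
      rw [exp_neg, exp_log hu.1]
      exact hq u hu
  have hc : 0 < -δ * log α := by
    rw [neg_mul_comm]
    exact mul_pos (by linarith) (hlog_pos α hα)
  have hlim := (hxt.div_const (-δ * log α)).rpow_const (p := 1 / δ) (Or.inr (by positivity))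
  rw [← neg_mul_comm, div_self hc.ne', one_rpow] at hlim
  refine hlim.congr' ?_
  filter_upwards [hmem] with u hu
  exact (div_rpow_one_div_mul_rpow_one_sub (by positivity) hc (hlog_pos u hu)
    (hlog_pos _ (hq_mem u hu)).le).symm
end

section
/- Let (X,Y) have standard normal N(0,1) margins and copula C with positive dependence. Fix α ∈ (0,1) and suppose -log C_{V|U}^{-1}(α|u) ~ k_α (-log u)^η as u → 0^+ for constants k_α > 0 and η ∈ (0,1]. Then the conditional quantile of Y given X=x satisfies F_{Y|X}^{-1}(α|x) ~ -(2^{1-η} k_α)^{1/2} |x|^η as x → -∞. -/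
open Real Set Filter Topology

/-- The standard normal CDF `Φ`. -/
noncomputable def stdNormalCDF (x : ℝ) : ℝ :=
  (∫ t in Set.Iic x, Real.exp (-t ^ 2 / 2)) / Real.sqrt (2 * Real.pi)

/-!
The Gaussian tail bounds `exp (-(x - 1)² / 2) / √(2π) ≤ Φ x ≤ exp (-x² / 2)` give
`-log Φ(x) ~ x² / 2` as `x → -∞`. Hence
`-log Φ(Q x) = -log q(Φ x) ~ k (-log Φ x)^η ~ k (x² / 2)^η → ∞`, which forces `Q x → -∞`;
the same equivalence at `Q x` then gives `(Q x)² / 2 ~ k (x² / 2)^η`, and `Q x` is the negative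
square root.
-/

open MeasureTheory Asymptotics

lemma integrable_exp_neg_sq_div_two : Integrable fun t : ℝ => exp (-t ^ 2 / 2) :=
  (integrable_exp_neg_mul_sq (by norm_num : (0:ℝ) < 1 / 2)).congr
    (Eventually.of_forall fun t => by ring_nf)

lemma one_le_sqrt_two_mul_pi : 1 ≤ √(2 * π) :=
  Real.one_le_sqrt.2 (by linarith [pi_gt_three])

lemma stdNormalCDF_pos (x : ℝ) : 0 < stdNormalCDF x := by
  refine div_pos ?_ (by positivity)
  rw [setIntegral_pos_iff_support_of_nonneg_ae (Eventually.of_forall fun t => (exp_pos _).le)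
    integrable_exp_neg_sq_div_two.integrableOn]
  simp [Function.support, exp_ne_zero]

lemma stdNormalCDF_mono : Monotone stdNormalCDF := fun _ _ hxy =>
  div_le_div_of_nonneg_right
    (setIntegral_mono_set integrable_exp_neg_sq_div_two.integrableOn
      (Eventually.of_forall fun _ => (exp_pos _).le) (Iic_subset_Iic.2 hxy).eventuallyLE)
    (by positivity)

lemma stdNormalCDF_le_exp {x : ℝ} (hx : x ≤ -1) : stdNormalCDF x ≤ exp (-x ^ 2 / 2) := by
  -- for `t ≤ x ≤ -1`, `x + t ≤ -2` gives `-t²/2 ≤ -x²/2 + (t - x)`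
  have hdom :
      (∫ t in Iic x, exp (-t ^ 2 / 2)) ≤ ∫ t in Iic x, exp (-x ^ 2 / 2) * exp (t - x) := by
    refine setIntegral_mono_on integrable_exp_neg_sq_div_two.integrableOn ?_ measurableSet_Iic
      fun t (ht : t ≤ x) => ?_
    · simpa [IntegrableOn, exp_sub, mul_div_assoc] using
        ((integrableOn_exp_Iic x).div_const (exp x)).const_mul (exp (-x ^ 2 / 2))
    · rw [← exp_add, exp_le_exp]
      nlinarith [mul_nonneg (sub_nonneg.2 ht) (by linarith : -(x + t) - 2 ≥ 0)]
  have hexp : (∫ t in Iic x, exp (-x ^ 2 / 2) * exp (t - x)) = exp (-x ^ 2 / 2) := by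
    simp_rw [integral_const_mul, exp_sub, integral_div, integral_exp_Iic,
      div_self (exp_ne_zero x), mul_one]
  calc stdNormalCDF x ≤ ∫ t in Iic x, exp (-t ^ 2 / 2) :=
        div_le_self (setIntegral_nonneg measurableSet_Iic fun _ _ => (exp_pos _).le)
          one_le_sqrt_two_mul_pi
    _ ≤ exp (-x ^ 2 / 2) := hdom.trans_eq hexp

lemma exp_div_le_stdNormalCDF {x : ℝ} (hx : x ≤ 0) :
    exp (-(x - 1) ^ 2 / 2) / √(2 * π) ≤ stdNormalCDF x := by
  refine div_le_div_of_nonneg_right ?_ (by positivity)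
  calc exp (-(x - 1) ^ 2 / 2) ≤ ∫ t in x - 1..x, exp (-t ^ 2 / 2) := by
        simpa using intervalIntegral.integral_mono_on (a := x - 1) (b := x)
          (f := fun _ => exp (-(x - 1) ^ 2 / 2)) (by linarith) intervalIntegrable_const
          integrable_exp_neg_sq_div_two.intervalIntegrable fun t ht => by
            rw [exp_le_exp]; nlinarith [ht.1, ht.2]
    _ = ∫ t in Ioc (x - 1) x, exp (-t ^ 2 / 2) := intervalIntegral.integral_of_le (by linarith)
    _ ≤ ∫ t in Iic x, exp (-t ^ 2 / 2) :=
        setIntegral_mono_set integrable_exp_neg_sq_div_two.integrableOn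
          (Eventually.of_forall fun _ => (exp_pos _).le) (Ioc_subset_Iic_self.eventuallyLE)

lemma sq_div_two_le_neg_log_stdNormalCDF {x : ℝ} (hx : x ≤ -1) :
    x ^ 2 / 2 ≤ -log (stdNormalCDF x) := by
  have := log_le_log (stdNormalCDF_pos x) (stdNormalCDF_le_exp hx)
  rw [log_exp] at this
  linarith

lemma neg_log_stdNormalCDF_le {x : ℝ} (hx : x ≤ 0) :
    -log (stdNormalCDF x) ≤ (x - 1) ^ 2 / 2 + log √(2 * π) := by
  have := log_le_log (by positivity) (exp_div_le_stdNormalCDF hx)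
  rw [log_div (exp_ne_zero _) (by positivity), log_exp] at this
  linarith

theorem isEquivalent_neg_log_stdNormalCDF_atBot :
    (fun x => -log (stdNormalCDF x)) ~[atBot] fun x => x ^ 2 / 2 := by
  refine isEquivalent_of_tendsto_one ?_
  -- `neg_log_stdNormalCDF_le` divided by `x²/2`
  have hupper :
      Tendsto (fun x : ℝ => (1 - x⁻¹) ^ 2 + 2 * log √(2 * π) * x⁻¹ ^ 2) atBot (𝓝 1) := by
    simpa using (((tendsto_const_nhds (x := (1:ℝ))).sub tendsto_inv_atBot_zero).pow 2).add
      ((tendsto_inv_atBot_zero.pow 2).const_mul (2 * log √(2 * π)))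
  refine tendsto_of_tendsto_of_tendsto_of_le_of_le' tendsto_const_nhds hupper ?_ ?_
  all_goals filter_upwards [eventually_le_atBot (-1 : ℝ)] with x hx
  · rw [Pi.div_apply, le_div_iff₀ (by nlinarith), one_mul]
    exact sq_div_two_le_neg_log_stdNormalCDF hx
  · have hx0 : x ≠ 0 := by linarith
    rw [Pi.div_apply, div_le_iff₀ (by nlinarith)]
    refine (neg_log_stdNormalCDF_le (by linarith)).trans_eq ?_
    field_simp

lemma tendsto_sq_div_two_atBot : Tendsto (fun x : ℝ => x ^ 2 / 2) atBot atTop :=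
  ((tendsto_pow_atTop two_ne_zero).comp tendsto_neg_atBot_atTop).atTop_div_const two_pos
    |>.congr fun x => by simp

lemma tendsto_stdNormalCDF_atBot : Tendsto stdNormalCDF atBot (𝓝[>] 0) := by
  refine tendsto_nhdsWithin_iff.2 ⟨?_, Eventually.of_forall stdNormalCDF_pos⟩
  have hL := isEquivalent_neg_log_stdNormalCDF_atBot.symm.tendsto_atTop tendsto_sq_div_two_atBot
  refine (tendsto_exp_atBot.comp (tendsto_neg_atTop_atBot.comp hL)).congr fun x => ?_
  simp [exp_log (stdNormalCDF_pos x)]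

lemma tendsto_atBot_of_tendsto_neg_log_stdNormalCDF {α : Type*} {l : Filter α} {f : α → ℝ}
    (h : Tendsto (fun x => -log (stdNormalCDF (f x))) l atTop) : Tendsto f l atBot :=
  tendsto_atBot.2 fun b => (h.eventually_gt_atTop (-log (stdNormalCDF b))).mono fun _ hx =>
    le_of_not_ge fun hb =>
      hx.not_ge (neg_le_neg (log_le_log (stdNormalCDF_pos b) (stdNormalCDF_mono hb)))

theorem Asymptotics.IsEquivalent.neg_of_sq {α : Type*} {l : Filter α} {u w : α → ℝ}
    (hw : 0 ≤ w) (hu : ∀ᶠ x in l, u x < 0) (h : (fun x => u x ^ 2) ~[l] fun x => w x ^ 2) :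
    u ~[l] fun x => -w x := by
  have hsqrt := h.rpow (fun x => sq_nonneg (w x)) (r := ((2 : ℕ) : ℝ)⁻¹)
  have hroot : ∀ y : ℝ, 0 ≤ y → (y ^ 2) ^ ((2 : ℕ) : ℝ)⁻¹ = y := fun y hy =>
    pow_rpow_inv_natCast hy two_ne_zero
  have habs : (fun x => -u x) ~[l] w := by
    refine (hsqrt.congr_right (Eventually.of_forall fun x => hroot _ (hw x))).congr_left ?_
    filter_upwards [hu] with x hx
    simp only [Pi.pow_apply]
    rw [← sq_abs, hroot _ (abs_nonneg _), abs_of_neg hx]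
  simpa using habs.neg

lemma two_mul_mul_sq_div_two_rpow {k : ℝ} (hk : 0 ≤ k) (η x : ℝ) :
    2 * (k * (x ^ 2 / 2) ^ η) = ((2 ^ (1 - η) * k) ^ (1 / 2 : ℝ) * |x| ^ η) ^ 2 := by
  rw [mul_pow, ← sqrt_eq_rpow, sq_sqrt (by positivity), rpow_pow_comm (abs_nonneg x), sq_abs,
    div_rpow (sq_nonneg x) zero_le_two, rpow_sub two_pos, rpow_one]
  field_simp

theorem cond_quantile_lower_tail_shape_general (k η : ℝ)
    (hk : 0 < k) (hη : η ∈ Ioc (0:ℝ) 1)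
    (q : ℝ → ℝ)
    (hq : Tendsto (fun u : ℝ => (-Real.log (q u)) / (k * (-Real.log u) ^ η))
      (𝓝[>] (0:ℝ)) (𝓝 1))
    (Qy : ℝ → ℝ) (hQy : ∀ x : ℝ, stdNormalCDF (Qy x) = q (stdNormalCDF x)) :
    Tendsto (fun x : ℝ => Qy x / (-((2 ^ (1 - η) * k) ^ ((1:ℝ)/2) * |x| ^ η)))
      atBot (𝓝 1) := by
  have hL := isEquivalent_neg_log_stdNormalCDF_atBot
  have hQL : (fun x => -log (stdNormalCDF (Qy x))) ~[atBot] fun x => k * (x ^ 2 / 2) ^ η := by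
    simp_rw [hQy]
    exact ((isEquivalent_of_tendsto_one hq).comp_tendsto tendsto_stdNormalCDF_atBot).trans
      (IsEquivalent.refl.mul (hL.rpow fun x => by positivity))
  have hQ : Tendsto Qy atBot atBot := tendsto_atBot_of_tendsto_neg_log_stdNormalCDF <|
    hQL.symm.tendsto_atTop <|
      ((tendsto_rpow_atTop hη.1).comp tendsto_sq_div_two_atBot).const_mul_atTop hk
  have hsq : (fun x => Qy x ^ 2) ~[atBot]
      fun x => ((2 ^ (1 - η) * k) ^ (1 / 2 : ℝ) * |x| ^ η) ^ 2 := by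
    have h2 := (IsEquivalent.refl (u := fun _ => (2 : ℝ))).mul
      ((hL.comp_tendsto hQ).symm.trans hQL)
    refine (h2.congr_left (Eventually.of_forall fun x => ?_)).congr_right
      (Eventually.of_forall fun x => two_mul_mul_sq_div_two_rpow hk.le η x)
    simp only [Pi.mul_apply, Function.comp_apply]
    ring
  refine (isEquivalent_iff_tendsto_one ?_).1
    (hsq.neg_of_sq (fun x => by positivity) (hQ.eventually_lt_atBot 0))
  filter_upwards [eventually_ne_atBot 0] with x hx
  exact neg_ne_zero.2 (by positivity)

/-- Let `(X,Y)` have standard normal margins and copula `C` with conditional quantile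
function `q u = C_{V|U}^{-1}(α|u)`.  Fix `α ∈ (0,1)` and suppose
`-log q(u) ~ k_α (-log u)^η` as `u → 0⁺` with `k_α > 0`, `η ∈ (0,1]`.  Then the conditional
quantile `Qy x = F_{Y|X}^{-1}(α|x)` (characterized by `Φ(Qy x) = q(Φ x)`) satisfies
`Qy x ~ -(2^{1-η} k_α)^{1/2} |x|^η` as `x → -∞`. -/
theorem cond_quantile_lower_tail_shape (α k η : ℝ) (hα : α ∈ Ioo (0:ℝ) 1)
    (hk : 0 < k) (hη : η ∈ Ioc (0:ℝ) 1)
    (q : ℝ → ℝ) (hq_mem : ∀ u ∈ Ioo (0:ℝ) 1, q u ∈ Ioo (0:ℝ) 1)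
    (hq : Tendsto (fun u : ℝ => (-Real.log (q u)) / (k * (-Real.log u) ^ η))
      (𝓝[>] (0:ℝ)) (𝓝 1))
    (Qy : ℝ → ℝ) (hQy : ∀ x : ℝ, stdNormalCDF (Qy x) = q (stdNormalCDF x)) :
    Tendsto (fun x : ℝ => Qy x / (-((2 ^ (1 - η) * k) ^ ((1:ℝ)/2) * |x| ^ η)))
      atBot (𝓝 1) :=
  cond_quantile_lower_tail_shape_general k η hk hη q hq Qy hQy
end
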